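/- If μ((0, target]) ≤ ε with ε > 0, then for every vector S of n+1 examples, the error of the hypothesis chosen from the labeled sample is at most ε: Error(choose(label_sample(target, S))) ≤ ε. -/

import Mathlib

open MeasureTheory Set

noncomputable def Error (μ : Measure NNReal) (target h : NNReal) : ENNReal :=
  μ {x | (x ≤ h) ≠ (x ≤ target)}

noncomputable def labelSample (target : NNReal) {n : ℕ} (S : Fin (n + 1) → NNReal) :
    Fin (n + 1) → NNReal × Bool :=
  fun i => (S i, decide (S i ≤ target))

noncomputable def chooseHyp {n : ℕ} (S : Fin (n + 1) → NNReal × Bool) : NNReal :=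
  Finset.univ.sup fun i => if (S i).2 then (S i).1 else 0

/-! The chosen threshold `h` is the largest positive example, so `h ≤ target`, and a threshold
below the target errs exactly on `(h, target] ⊆ (0, target]`. -/

theorem setOf_le_ne_le_eq_Ioc {α : Type*} [LinearOrder α] {a b : α} (hab : a ≤ b) :
    {x | (x ≤ a) ≠ (x ≤ b)} = Ioc a b := by
  ext x
  by_cases hxa : x ≤ a
  · simp [hxa, hxa.trans hab]
  · simp [hxa, not_le.mp hxa]

theorem error_eq_measure_Ioc (μ : Measure NNReal) {target h : NNReal} (h_le : h ≤ target) :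
    Error μ target h = μ (Ioc h target) := by
  rw [Error, setOf_le_ne_le_eq_Ioc h_le]

theorem chooseHyp_labelSample_le (target : NNReal) {n : ℕ} (S : Fin (n + 1) → NNReal) :
    chooseHyp (labelSample target S) ≤ target := by
  refine Finset.sup_le fun i _ => ?_
  by_cases hi : S i ≤ target <;> simp [labelSample, hi]

theorem always_succeed_general (μ : Measure NNReal) (target : NNReal)
    (ε : NNReal) (n : ℕ) (h : μ (Ioc 0 target) ≤ (ε : ENNReal)) :
    ∀ S : Fin (n + 1) → NNReal,
      Error μ target (chooseHyp (labelSample target S)) ≤ (ε : ENNReal) := by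
  intro S
  rw [error_eq_measure_Ioc μ (chooseHyp_labelSample_le target S)]
  exact (measure_mono (Ioc_subset_Ioc_left zero_le)).trans h

theorem always_succeed (μ : Measure NNReal) [IsProbabilityMeasure μ] (target : NNReal)
    (ε : NNReal) (hε : 0 < ε) (n : ℕ) (h : μ (Ioc 0 target) ≤ (ε : ENNReal)) :
    ∀ S : Fin (n + 1) → NNReal,
      Error μ target (chooseHyp (labelSample target S)) ≤ (ε : ENNReal) :=
  always_succeed_general μ target ε n h
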